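/- Combining the two previous facts: suppose BF : A → Set((ℝ²)ⁿ) is concave set-valued on convex A, points u¹,…,uᴹ ∈ A satisfy the admissibility condition that every x in conv(⋃ₖ BF(uᵏ)) has J(x) < ∞ (i.e., lies in the feasible set Y), and ‖L(x)‖ ≤ δ for all x. Let U = {u ∈ A : BF(u) ⊆ Y}. Then the set Ã₀* = conv({Σᵢ uᵢᵏ}ₖ) is a δ-approximation of Ã₀ = {Σᵢ uᵢ − L(u) : u ∈ U}: for every x₀' ∈ Ã₀* there exists x₀ ∈ Ã₀ with ‖x₀ − x₀'‖ ≤ δ. -/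
import Mathlib


open Pointwise

/-- if `BF` is concave set-valued on a convex set `A`, the candidate points
`u k` satisfy the admissibility condition `convexHull (⋃ k, BF (u k)) ⊆ Y`, and the losses
are bounded by `δ`, then the convex hull of the lossless aggregate points is a
`δ`-approximation of the exact aggregated PQt profile over `U = {u ∈ A | BF u ⊆ Y}`. -/
theorem stmt3 {n M : ℕ} (δ : ℝ)
    (A Y : Set (Fin n → EuclideanSpace ℝ (Fin 2))) (hA : Convex ℝ A)
    (BF : (Fin n → EuclideanSpace ℝ (Fin 2)) → Set (Fin n → EuclideanSpace ℝ (Fin 2)))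
    (hconc : ∀ u₁ ∈ A, ∀ u₂ ∈ A, ∀ α : ℝ, α ∈ Set.Icc (0 : ℝ) 1 →
      BF (α • u₁ + (1 - α) • u₂) ⊆ α • BF u₁ + (1 - α) • BF u₂)
    (L : (Fin n → EuclideanSpace ℝ (Fin 2)) → EuclideanSpace ℝ (Fin 2))
    (hL : ∀ x, ‖L x‖ ≤ δ)
    (u : Fin M → Fin n → EuclideanSpace ℝ (Fin 2)) (hu : ∀ k, u k ∈ A)
    (hadm : convexHull ℝ (⋃ k, BF (u k)) ⊆ Y) :
    ∀ x₀' ∈ convexHull ℝ {v : EuclideanSpace ℝ (Fin 2) | ∃ k, v = ∑ i, u k i},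
      ∃ x₀ ∈ {v : EuclideanSpace ℝ (Fin 2) |
          ∃ w ∈ {w ∈ A | BF w ⊆ Y}, v = (∑ i, w i) - L w},
        ‖x₀ - x₀'‖ ≤ δ := by
  intro x₀' hx₀'
  set C := convexHull ℝ (⋃ k, BF (u k)) with hC
  -- The set S of points in A whose BF image lies in C is convex
  set S : Set (Fin n → EuclideanSpace ℝ (Fin 2)) := {w ∈ A | BF w ⊆ C} with hS
  have hSconv : Convex ℝ S := by
    intro w₁ hw₁ w₂ hw₂ a b ha hb hab
    refine ⟨hA hw₁.1 hw₂.1 ha hb hab, ?_⟩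
    have hb' : b = 1 - a := by linarith
    have h1 : BF (a • w₁ + b • w₂) ⊆ a • BF w₁ + (1 - a) • BF w₂ := by
      rw [hb']
      exact hconc w₁ hw₁.1 w₂ hw₂.1 a ⟨ha, by linarith⟩
    refine h1.trans ?_
    have h2 : a • BF w₁ + (1 - a) • BF w₂ ⊆ a • C + (1 - a) • C :=
      Set.add_subset_add (Set.smul_set_mono hw₁.2) (Set.smul_set_mono hw₂.2)
    refine h2.trans ?_
    exact (convex_convexHull ℝ _).set_combo_subset ha (by linarith) (by ring)
  have huS : ∀ k, u k ∈ S := fun k =>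
    ⟨hu k, (Set.subset_iUnion (fun k => BF (u k)) k).trans (subset_convexHull ℝ _)⟩
  -- Express the target set as the image of range u under the linear sum map
  have hlin : IsLinearMap ℝ (fun w : Fin n → EuclideanSpace ℝ (Fin 2) => ∑ i, w i) :=
    ⟨fun x y => by simp [Finset.sum_add_distrib], fun c x => by simp [Finset.smul_sum]⟩
  have himg : {v : EuclideanSpace ℝ (Fin 2) | ∃ k, v = ∑ i, u k i} =
      (fun w : Fin n → EuclideanSpace ℝ (Fin 2) => ∑ i, w i) '' Set.range u := by
    ext v
    constructor
    · rintro ⟨k, rfl⟩; exact ⟨u k, ⟨k, rfl⟩, rfl⟩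
    · rintro ⟨w, ⟨k, rfl⟩, rfl⟩; exact ⟨k, rfl⟩
  rw [himg, ← hlin.image_convexHull] at hx₀'
  obtain ⟨w, hw, rfl⟩ := hx₀'
  have hwS : w ∈ S := by
    have : convexHull ℝ (Set.range u) ⊆ S :=
      convexHull_min (by rintro _ ⟨k, rfl⟩; exact huS k) hSconv
    exact this hw
  refine ⟨(∑ i, w i) - L w, ⟨w, ⟨hwS.1, hwS.2.trans hadm⟩, rfl⟩, ?_⟩
  simpa using hL w
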